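/- Let V ⊆ H_B⊗H_C be a subspace spanned by vectors φ₀,...,φ_{N−1} (N = 2ⁿ) such that for all complex α_i the vector φ_{N−1} + Σ_{i<N−1} α_i φ_i has Schmidt rank N. Then any collection of product vectors whose span contains V has size at least 2N − 1. -/

import Mathlib

/-! Let N = 2ⁿ and let V' be the span of φ₀, …, φ_{N-2}, of dimension N - 1. Extend a basis
of V' by some of the m product vectors to a basis of the span of all of them: by the Steinitz
exchange lemma at most m - (N - 1) product vectors are added, and φ_{N-1} lies in V' plus their
span. Hence some φ_{N-1} + Σ_{i<N-1} αᵢ φᵢ is a combination of at most m - N + 1 product vectors,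
so its Schmidt rank N is at most m - N + 1. -/

open TensorProduct

/-- Schmidt rank of a bipartite vector: minimal number of product vectors
summing to it (equal to the rank of the coefficient matrix in finite dimension). -/
noncomputable def sRank {B C : Type*} [AddCommGroup B] [Module ℂ B]
    [AddCommGroup C] [Module ℂ C] (ψ : B ⊗[ℂ] C) : ℕ :=
  sInf {r | ∃ (b : Fin r → B) (c : Fin r → C), ψ = ∑ i, b i ⊗ₜ[ℂ] c i}

open Submodule

theorem LinearIndepOn.exists_subset_ncard_add_card_le_and_span_le_sup {K V : Type*}
    [DivisionRing K] [AddCommGroup V] [Module K V] {s : Set V} (hs : LinearIndepOn K id s)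
    {P : Finset V} (hsP : s ⊆ span K (P : Set V)) :
    ∃ T ⊆ P, s.ncard + T.card ≤ P.card ∧ span K (P : Set V) ≤ span K s ⊔ span K T := by
  classical
  obtain ⟨b, hb_sub, hsb, hb_span, hb⟩ :=
    exists_linearIndepOn_id_extension hs (Set.subset_union_left : s ⊆ s ∪ P)
  obtain ⟨hb_fin, hb_card⟩ := exists_finite_card_le_of_finite_of_linearIndependent_of_span
    P.finite_toSet hb (hb_sub.trans (Set.union_subset hsP subset_span))
  refine ⟨(hb_fin.sdiff (t := s)).toFinset, ?_, ?_, ?_⟩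
  · intro v hv
    simp only [Set.Finite.mem_toFinset, Set.mem_sdiff] at hv
    simpa [hv.2] using hb_sub hv.1
  · rw [← Set.ncard_eq_toFinset_card _ hb_fin.sdiff, add_comm,
      Set.ncard_sdiff_add_ncard_of_subset hsb hb_fin, Set.ncard_eq_toFinset_card b hb_fin]
    simpa using hb_card
  · calc span K (P : Set V) ≤ span K b := span_le.mpr (Set.subset_union_right.trans hb_span)
      _ ≤ span K (s ∪ b \ s) := span_mono (by simp)
      _ = span K s ⊔ span K (b \ s) := span_union _ _
      _ = _ := by simp

theorem sRank_sum_tmul_le {B C ι : Type*} [AddCommGroup B] [Module ℂ B] [AddCommGroup C]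
    [Module ℂ C] [Fintype ι] (b : ι → B) (c : ι → C) :
    sRank (∑ i, b i ⊗ₜ[ℂ] c i) ≤ Fintype.card ι := by
  let e := Fintype.equivFin ι
  exact Nat.sInf_le ⟨b ∘ e.symm, c ∘ e.symm, (e.symm.sum_comp fun i => b i ⊗ₜ[ℂ] c i).symm⟩

theorem sRank_le_card_of_mem_span {B C : Type*} [AddCommGroup B] [Module ℂ B] [AddCommGroup C]
    [Module ℂ C] {T : Finset (B ⊗[ℂ] C)} (hT : ∀ t ∈ T, ∃ (b : B) (c : C), t = b ⊗ₜ[ℂ] c)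
    {x : B ⊗[ℂ] C} (hx : x ∈ span ℂ (T : Set (B ⊗[ℂ] C))) : sRank x ≤ T.card := by
  obtain ⟨f, rfl⟩ := mem_span_finset'.mp hx
  choose b c hbc using fun t : T => hT t t.2
  calc sRank (∑ t : T, f t • (t : B ⊗[ℂ] C))
      = sRank (∑ t : T, (f t • b t) ⊗ₜ[ℂ] c t) := by
        simp only [hbc, smul_tmul']
    _ ≤ T.card := (sRank_sum_tmul_le _ _).trans_eq (Fintype.card_coe T)

theorem span_needs_many_products {B C : Type*}
    [AddCommGroup B] [Module ℂ B]
    [AddCommGroup C] [Module ℂ C]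
    (n : ℕ) (φ : Fin (2 ^ n) → B ⊗[ℂ] C) (hφ : LinearIndependent ℂ φ)
    (hrank : ∀ α : Fin (2 ^ n) → ℂ,
      sRank (φ ⟨2 ^ n - 1, by have := Nat.one_le_two_pow (n := n); omega⟩ +
        ∑ i : Fin (2 ^ n), if (i : ℕ) < 2 ^ n - 1 then α i • φ i else 0) = 2 ^ n)
    (m : ℕ) (p : Fin m → B ⊗[ℂ] C)
    (hp : ∀ i, ∃ (b : B) (c : C), p i = b ⊗ₜ[ℂ] c)
    (hspan : Submodule.span ℂ (Set.range φ) ≤ Submodule.span ℂ (Set.range p)) :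
    2 * 2 ^ n - 1 ≤ m := by
  classical
  set last : Fin (2 ^ n) := ⟨2 ^ n - 1, by have := Nat.one_le_two_pow (n := n); omega⟩
  set F : Finset (Fin (2 ^ n)) := {i | (i : ℕ) < 2 ^ n - 1}
  set P : Finset (B ⊗[ℂ] C) := Finset.univ.image p
  have hP : span ℂ (P : Set (B ⊗[ℂ] C)) = span ℂ (Set.range p) := by simp [P]
  have hF_sub : φ '' F ⊆ Set.range φ := Set.image_subset_range φ F
  obtain ⟨T, hTP, hT_card, hT_span⟩ :=
    (hφ.linearIndepOn_id.mono hF_sub).exists_subset_ncard_add_card_le_and_span_le_sup (P := P)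
      (hP ▸ hF_sub.trans (span_le.mp hspan))
  obtain ⟨w, hw, u, hu, hwu⟩ :=
    mem_sup.mp (hT_span (hP ▸ hspan (subset_span (Set.mem_range_self last))))
  obtain ⟨β, rfl⟩ := (mem_span_image_finset_iff_exists_fun' ℂ).mp hw
  have hT_prod : ∀ t ∈ T, ∃ (b : B) (c : C), t = b ⊗ₜ[ℂ] c := fun t ht => by
    obtain ⟨i, -, rfl⟩ := Finset.mem_image.mp (hTP ht)
    exact hp i
  have hu_rank := sRank_le_card_of_mem_span hT_prod hu
  have hsum : φ last +
      ∑ i : Fin (2 ^ n), (if (i : ℕ) < 2 ^ n - 1 then (-β) i • φ i else 0) = u := by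
    rw [← Finset.sum_filter, ← hwu]
    simp [F, neg_smul, Finset.sum_neg_distrib]
  have hF_card : (φ '' F).ncard = 2 ^ n - 1 := by
    rw [Set.ncard_image_of_injective _ hφ.injective, Set.ncard_coe_finset, Fin.card_filter_val_lt]
    exact min_eq_right (Nat.sub_le _ _)
  have hP_card : P.card ≤ m := Finset.card_image_le.trans_eq (Finset.card_fin m)
  have hu_rank_eq : sRank u = 2 ^ n := hsum ▸ hrank (-β)
  omega
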